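/- arXiv:1912.04996 — 8 statements merged into one kernel-verified Lean document; each statement's English description precedes it below -/
import Mathlib

section
/- Structure of the current for a potential in canonical form: suppose the real n×3 matrix A is in canonical form, i.e. there are nonnegative integers x, y, d with x + d ≤ p, y + d ≤ q, x + y + d ≤ 3, and positive reals σ₁,…,σ_x, μ₁,…,μ_y such that the only nonzero entries of A are A(i, i) = σ_i for 1 ≤ i ≤ x, A(p + j, x + j) = μ_j for 1 ≤ j ≤ y, and A(x + k, x + y + k) = A(p + y + k, x + y + k) = 1 for 1 ≤ k ≤ d. Let J := A·(Aᵀ η A) − trace(Aᵀ η A)·A. Then J(ν, k) = 0 for every position (ν, k) at which A(ν, k) = 0, and there exists a single real number α such that J(x + k, x + y + k) = α and J(p + y + k, x + y + k) = α for all 1 ≤ k ≤ d (in particular, the current has nonzero entries only at the diagonal positions of the blocks of A, and the entries at the two identity blocks are all equal to one common value α). -/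
/-
Every row of a potential in canonical form has at most one nonzero entry, so its columns are
pairwise η-orthogonal and the Gram matrix `B = Aᵀ η A` is diagonal. Hence
`J ν k = A ν k * (B k k - trace B)`, which vanishes wherever `A` does. A column carrying an
identity block has one entry `1` in the positive and one in the negative part of the signature,
so it is η-null: `B k k = 0` there, and `J = -trace B` at both of its nonzero entries.
-/

open Matrix

/-- The pseudo-Euclidean metric matrix of signature `(p, q)`. -/
noncomputable def eta (p q : ℕ) : Matrix (Fin (p + q)) (Fin (p + q)) ℝ :=
  Matrix.diagonal fun i => if (i : ℕ) < p then 1 else -1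

section RowSupport

variable {m n R : Type*} [CommRing R]

theorem transpose_mul_diagonal_mul_apply [Fintype m] [DecidableEq m] (A : Matrix m n R)
    (w : m → R) (j k : n) :
    (Aᵀ * diagonal w * A) j k = ∑ i, w i * A i j * A i k := by
  rw [mul_apply]
  simp only [mul_diagonal, transpose_apply]
  exact Finset.sum_congr rfl fun i _ => by ring

theorem isDiag_transpose_mul_diagonal_mul [Fintype m] [DecidableEq m] (A : Matrix m n R)
    (w : m → R) (hA : ∀ i j k, j ≠ k → A i j * A i k = 0) : (Aᵀ * diagonal w * A).IsDiag := by
  intro j k hjk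
  rw [transpose_mul_diagonal_mul_apply]
  exact Finset.sum_eq_zero fun i _ => by rw [mul_assoc, hA i j k hjk, mul_zero]

theorem mul_sub_trace_smul_apply_of_isDiag [Fintype n] [DecidableEq n] {B : Matrix n n R}
    (hB : B.IsDiag) (A : Matrix m n R) (i : m) (k : n) :
    (A * B - B.trace • A) i k = A i k * (B k k - B.trace) := by
  have hAB : A * B = A * diagonal B.diag := by rw [hB.diagonal_diag]
  rw [Matrix.sub_apply, hAB, mul_diagonal, Matrix.smul_apply, smul_eq_mul, diag_apply]
  ring

end RowSupport

def canonicalPotential {R : Type*} [Zero R] [One R] (p q r x y d : ℕ) (σ μ : ℕ → R) :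
    Matrix (Fin (p + q)) (Fin r) R :=
  of fun i j =>
    if (i : ℕ) < x ∧ (j : ℕ) = (i : ℕ) then σ (i : ℕ)
    else if p ≤ (i : ℕ) ∧ (i : ℕ) < p + y ∧ (j : ℕ) = x + ((i : ℕ) - p) then
      μ ((i : ℕ) - p)
    else if x ≤ (i : ℕ) ∧ (i : ℕ) < x + d ∧ (j : ℕ) = x + y + ((i : ℕ) - x) then 1
    else if p + y ≤ (i : ℕ) ∧ (i : ℕ) < p + y + d ∧
        (j : ℕ) = x + y + ((i : ℕ) - (p + y)) then 1
    else 0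

section CanonicalPotential

variable {p q r x y d : ℕ}

theorem canonicalPotential_mul_mul_eq_zero {R : Type*} [MulZeroOneClass R] {σ μ : ℕ → R}
    (hxd : x + d ≤ p) (i : Fin (p + q)) (j k : Fin r) (hjk : j ≠ k) :
    canonicalPotential p q r x y d σ μ i j * canonicalPotential p q r x y d σ μ i k = 0 := by
  have hjk : (j : ℕ) ≠ k := Fin.val_ne_of_ne hjk
  simp only [canonicalPotential, of_apply]
  split_ifs <;> first | omega | simp

variable {R : Type*} [Zero R] [One R] {σ μ : ℕ → R} {i : Fin (p + q)} {j : Fin r} {k : ℕ}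

theorem canonicalPotential_apply_identityBlock_pos (hxd : x + d ≤ p) (hk : k < d)
    (hi : (i : ℕ) = x + k) (hj : (j : ℕ) = x + y + k) :
    canonicalPotential p q r x y d σ μ i j = 1 := by
  simp only [canonicalPotential, of_apply]
  split_ifs <;> first | rfl | omega

theorem canonicalPotential_apply_identityBlock_neg (hk : k < d)
    (hi : (i : ℕ) = p + y + k) (hj : (j : ℕ) = x + y + k) :
    canonicalPotential p q r x y d σ μ i j = 1 := by
  simp only [canonicalPotential, of_apply]
  split_ifs <;> first | rfl | omega

end CanonicalPotential

theorem canonicalPotential_transpose_mul_eta_mul_apply_self_eq_zero {p q r x y d : ℕ}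
    {σ μ : ℕ → ℝ} (hxd : x + d ≤ p) (hyd : y + d ≤ q) {c : Fin r} {k : ℕ} (hk : k < d)
    (hc : (c : ℕ) = x + y + k) :
    ((canonicalPotential p q r x y d σ μ)ᵀ * eta p q * canonicalPotential p q r x y d σ μ) c c
      = 0 := by
  let a : Fin (p + q) := ⟨x + k, by omega⟩
  let b : Fin (p + q) := ⟨p + y + k, by omega⟩
  have hab : a ≠ b := Fin.ne_of_val_ne (by simp only [a, b]; omega)
  have hC : ∀ i, i ≠ a ∧ i ≠ b → canonicalPotential p q r x y d σ μ i c = 0 := by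
    rintro i ⟨hia, hib⟩
    have hia : (i : ℕ) ≠ x + k := fun h => hia (Fin.ext h)
    have hib : (i : ℕ) ≠ p + y + k := fun h => hib (Fin.ext h)
    simp only [canonicalPotential, of_apply]
    split_ifs <;> first | omega | rfl
  rw [eta, transpose_mul_diagonal_mul_apply,
    Fintype.sum_eq_add a b hab fun i hi => by rw [hC i hi, mul_zero],
    canonicalPotential_apply_identityBlock_pos hxd hk rfl hc,
    canonicalPotential_apply_identityBlock_neg hk rfl hc]
  simp only [a, b]
  rw [if_pos (by omega), if_neg (by omega)]
  ring

/-- If the potential `A` is in canonical (hyperbolic SVD) form with parameters `x, y, d`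
and positive diagonal entries `σ`, `μ`, then the current
`J = A (Aᵀ η A) - trace (Aᵀ η A) • A` vanishes wherever `A` vanishes, and its entries at
the two identity blocks of `A` are all equal to one common real number `α`. -/
theorem canonicalPotential_current_structure (p q : ℕ)
    (x y d : ℕ) (hxd : x + d ≤ p) (hyd : y + d ≤ q) (hxyd : x + y + d ≤ 3)
    (σ μ : ℕ → ℝ)
    (A : Matrix (Fin (p + q)) (Fin 3) ℝ)
    (hA : ∀ (i : Fin (p + q)) (j : Fin 3),
      A i j =
        if (i : ℕ) < x ∧ (j : ℕ) = (i : ℕ) then σ (i : ℕ)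
        else if p ≤ (i : ℕ) ∧ (i : ℕ) < p + y ∧ (j : ℕ) = x + ((i : ℕ) - p) then
          μ ((i : ℕ) - p)
        else if x ≤ (i : ℕ) ∧ (i : ℕ) < x + d ∧ (j : ℕ) = x + y + ((i : ℕ) - x) then 1
        else if p + y ≤ (i : ℕ) ∧ (i : ℕ) < p + y + d ∧
            (j : ℕ) = x + y + ((i : ℕ) - (p + y)) then 1
        else 0)
    (J : Matrix (Fin (p + q)) (Fin 3) ℝ)
    (hJ : J = A * (Aᵀ * eta p q * A) - (Aᵀ * eta p q * A).trace • A) :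
    (∀ (ν : Fin (p + q)) (k : Fin 3), A ν k = 0 → J ν k = 0) ∧
    ∃ α : ℝ, ∀ k : ℕ, ∀ hk : k < d,
      J ⟨x + k, by omega⟩ ⟨x + y + k, by omega⟩ = α ∧
      J ⟨p + y + k, by omega⟩ ⟨x + y + k, by omega⟩ = α := by
  obtain rfl : A = canonicalPotential p q 3 x y d σ μ := Matrix.ext hA
  set B := (canonicalPotential p q 3 x y d σ μ)ᵀ * eta p q * canonicalPotential p q 3 x y d σ μ
  have hB : B.IsDiag :=
    isDiag_transpose_mul_diagonal_mul _ _ fun i => canonicalPotential_mul_mul_eq_zero hxd i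
  subst hJ
  refine ⟨fun ν k h => by rw [mul_sub_trace_smul_apply_of_isDiag hB, h, zero_mul], -B.trace,
    fun k hk => ?_⟩
  have hnull : B ⟨x + y + k, by omega⟩ ⟨x + y + k, by omega⟩ = 0 :=
    canonicalPotential_transpose_mul_eta_mul_apply_self_eq_zero hxd hyd hk rfl
  have hupper :
      canonicalPotential p q 3 x y d σ μ ⟨x + k, by omega⟩ ⟨x + y + k, by omega⟩ = 1 :=
    canonicalPotential_apply_identityBlock_pos hxd hk rfl rfl
  have hlower :
      canonicalPotential p q 3 x y d σ μ ⟨p + y + k, by omega⟩ ⟨x + y + k, by omega⟩ = 1 :=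
    canonicalPotential_apply_identityBlock_neg hk rfl rfl
  simp only [mul_sub_trace_smul_apply_of_isDiag hB, hnull, hupper, hlower]
  constructor <;> ring
end

section
/- Symmetry of the Euclidean-type cubic system: if (b₁, b₂, b₃) with b₁ ≠ 0, b₂ ≠ 0, b₃ ≠ 0 is a solution of the system b₁(b₂² + b₃²) = j₁, b₂(b₁² + b₃²) = j₂, b₃(b₁² + b₂²) = j₃, then (K/b₁, K/b₂, K/b₃) is also a solution of the same system, where K = ((b₁ b₂ b₃)²)^{1/3} is the real cube root of (b₁ b₂ b₃)². -/
/-!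
Since `K ^ 3 = (b₁ b₂ b₃) ^ 2`, each monomial transforms as
`(K / b₁) (K / b₂) ^ 2 = K ^ 3 / (b₁ b₂ ^ 2) = b₁ b₃ ^ 2`: the substitution `bᵢ ↦ K / bᵢ`
swaps the two monomials of every equation, so each left-hand side is unchanged.
-/

/-- The real cube root. -/
noncomputable def cbrt (x : ℝ) : ℝ :=
  if 0 ≤ x then x ^ ((1 : ℝ) / 3) else -((-x) ^ ((1 : ℝ) / 3))

theorem cbrt_pow_three (x : ℝ) : cbrt x ^ 3 = x := by
  have rpow_one_third_pow_three {y : ℝ} (hy : 0 ≤ y) : (y ^ ((1 : ℝ) / 3)) ^ 3 = y := by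
    rw [← Real.rpow_natCast, ← Real.rpow_mul hy]; norm_num
  unfold cbrt
  split_ifs with hx
  · exact rpow_one_third_pow_three hx
  · rw [neg_pow, rpow_one_third_pow_three (by linarith)]; ring

section Field

variable {F : Type*} [Field F] {K x y z : F}

theorem div_mul_div_sq_eq_of_pow_three_eq (hy : y ≠ 0) (hK : K ^ 3 = (x * y * z) ^ 2) :
    K / x * (K / y) ^ 2 = x * z ^ 2 :=
  calc K / x * (K / y) ^ 2 = K ^ 3 / (x * y ^ 2) := by ring
    _ = x * x * x⁻¹ * z ^ 2 * (y * y⁻¹) ^ 2 := by rw [hK]; ring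
    _ = x * z ^ 2 := by rw [mul_self_mul_inv, mul_inv_cancel₀ hy]; ring

theorem div_mul_div_sq_add_div_sq_eq_of_pow_three_eq (hy : y ≠ 0) (hz : z ≠ 0)
    (hK : K ^ 3 = (x * y * z) ^ 2) :
    K / x * ((K / y) ^ 2 + (K / z) ^ 2) = x * (y ^ 2 + z ^ 2) := by
  have hK' : K ^ 3 = (x * z * y) ^ 2 := by rw [hK]; ring
  rw [mul_add, div_mul_div_sq_eq_of_pow_three_eq hy hK,
    div_mul_div_sq_eq_of_pow_three_eq hz hK']
  ring

end Field

/-- Symmetry of the Euclidean-type cubic system: if `(b₁, b₂, b₃)` with all entries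
nonzero solves `b₁(b₂² + b₃²) = j₁`, `b₂(b₁² + b₃²) = j₂`, `b₃(b₁² + b₂²) = j₃`, then so
does `(K/b₁, K/b₂, K/b₃)` where `K = ((b₁ b₂ b₃)²)^{1/3}`. -/
theorem euclidean_cubic_symmetry (j₁ j₂ j₃ b₁ b₂ b₃ : ℝ)
    (hb₁ : b₁ ≠ 0) (hb₂ : b₂ ≠ 0) (hb₃ : b₃ ≠ 0)
    (h₁ : b₁ * (b₂ ^ 2 + b₃ ^ 2) = j₁)
    (h₂ : b₂ * (b₁ ^ 2 + b₃ ^ 2) = j₂)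
    (h₃ : b₃ * (b₁ ^ 2 + b₂ ^ 2) = j₃)
    (K : ℝ) (hK : K = cbrt ((b₁ * b₂ * b₃) ^ 2)) :
    (K / b₁) * ((K / b₂) ^ 2 + (K / b₃) ^ 2) = j₁ ∧
    (K / b₂) * ((K / b₁) ^ 2 + (K / b₃) ^ 2) = j₂ ∧
    (K / b₃) * ((K / b₁) ^ 2 + (K / b₂) ^ 2) = j₃ := by
  have hK₁ : K ^ 3 = (b₁ * b₂ * b₃) ^ 2 := hK ▸ cbrt_pow_three _
  have hK₂ : K ^ 3 = (b₂ * b₁ * b₃) ^ 2 := by rw [hK₁]; ring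
  have hK₃ : K ^ 3 = (b₃ * b₁ * b₂) ^ 2 := by rw [hK₁]; ring
  exact ⟨h₁ ▸ div_mul_div_sq_add_div_sq_eq_of_pow_three_eq hb₂ hb₃ hK₁,
    h₂ ▸ div_mul_div_sq_add_div_sq_eq_of_pow_three_eq hb₁ hb₃ hK₂,
    h₃ ▸ div_mul_div_sq_add_div_sq_eq_of_pow_three_eq hb₁ hb₂ hK₃⟩
end

section
/- If j₁ = j₂ > j₃ > 0, then the system b₁(b₂² + b₃²) = j₁, b₂(b₁² + b₃²) = j₂, b₃(b₁² + b₂²) = j₃ has exactly two real solutions (b₁₊, b₂₊, b₃₊) and (b₁₋, b₂₋, b₃₋), given by b₁± = b₂± = (j₃/(2 z±))^{1/3}, b₃± = z± · b₁±, where z± = (j₁ ± √(j₁² − j₃²))/j₃. Moreover z₊ z₋ = 1 and b₁₊ b₁₋ = b₂₊ b₂₋ = b₃₊ b₃₋ = (j₃/2)^{2/3}. -/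
private lemma cube_inj {x y : ℝ} (h : x ^ 3 = y ^ 3) : x = y :=
  ((Odd.strictMono_pow (R := ℝ) (by decide : Odd 3)).injective) h

private lemma rpow_third (x : ℝ) (hx : 0 ≤ x) : (x ^ ((1:ℝ)/3)) ^ 3 = x := by
  rw [← Real.rpow_natCast (x ^ ((1:ℝ)/3)) 3, ← Real.rpow_mul hx]
  norm_num

private lemma cbrt_pow (x : ℝ) (hx : 0 ≤ x) : cbrt x ^ 3 = x := by
  rw [cbrt, if_pos hx]; exact rpow_third x hx

private lemma cbrt_cube (x : ℝ) : cbrt (x ^ 3) = x := by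
  rcases le_or_gt 0 x with hx | hx
  · exact cube_inj (cbrt_pow _ (by positivity))
  · have h3 : ¬ (0:ℝ) ≤ x ^ 3 := by
      simp only [(by decide : Odd 3).pow_nonneg_iff]; linarith
    rw [cbrt, if_neg h3]
    have hneg : -(x ^ 3) = (-x) ^ 3 := by ring
    rw [hneg]
    have hy : (((-x) ^ 3 : ℝ) ^ ((1:ℝ)/3)) = -x :=
      cube_inj (rpow_third _ (pow_nonneg (by linarith) 3))
    rw [hy]; ring

private lemma cbrt_pos {x : ℝ} (hx : 0 < x) : 0 < cbrt x := by
  rw [cbrt, if_pos hx.le]; exact Real.rpow_pos_of_pos hx _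


set_option maxHeartbeats 1000000 in
/-- If `j₁ = j₂ > j₃ > 0` then the system `b₁(b₂² + b₃²) = j₁`, `b₂(b₁² + b₃²) = j₂`,
`b₃(b₁² + b₂²) = j₃` has exactly the two solutions `b₁± = b₂± = (j₃/(2 z±))^{1/3}`,
`b₃± = z± b₁±` with `z± = (j₁ ± √(j₁² − j₃²))/j₃`; moreover `z₊ z₋ = 1` and
`b₁₊ b₁₋ = b₂₊ b₂₋ = b₃₊ b₃₋ = (j₃/2)^{2/3}`. -/
theorem euclidean_cubic_two_equal_currents (j₁ j₂ j₃ : ℝ)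
    (h12 : j₁ = j₂) (h3 : 0 < j₃) (h13 : j₃ < j₁) :
    ∃ zp zm b1p b1m : ℝ,
      zp = (j₁ + Real.sqrt (j₁ ^ 2 - j₃ ^ 2)) / j₃ ∧
      zm = (j₁ - Real.sqrt (j₁ ^ 2 - j₃ ^ 2)) / j₃ ∧
      b1p = cbrt (j₃ / (2 * zp)) ∧
      b1m = cbrt (j₃ / (2 * zm)) ∧
      {t : ℝ × ℝ × ℝ |
          t.1 * (t.2.1 ^ 2 + t.2.2 ^ 2) = j₁ ∧
          t.2.1 * (t.1 ^ 2 + t.2.2 ^ 2) = j₂ ∧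
          t.2.2 * (t.1 ^ 2 + t.2.1 ^ 2) = j₃} =
        {(b1p, b1p, zp * b1p), (b1m, b1m, zm * b1m)} ∧
      (b1p, b1p, zp * b1p) ≠ (b1m, b1m, zm * b1m) ∧
      zp * zm = 1 ∧
      b1p * b1m = cbrt ((j₃ / 2) ^ 2) ∧
      (zp * b1p) * (zm * b1m) = cbrt ((j₃ / 2) ^ 2) := by
  subst h12
  have hj1 : 0 < j₁ := h3.trans h13
  have hj3 : j₃ ≠ 0 := ne_of_gt h3
  set D := Real.sqrt (j₁ ^ 2 - j₃ ^ 2) with hDdef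
  have hsqlt : j₃ ^ 2 < j₁ ^ 2 := by
    have := pow_lt_pow_left₀ h13 h3.le (two_ne_zero)
    linarith
  have hsub : (0:ℝ) ≤ j₁ ^ 2 - j₃ ^ 2 := by linarith
  have hD2 : D ^ 2 = j₁ ^ 2 - j₃ ^ 2 := Real.sq_sqrt hsub
  have hDnn : 0 ≤ D := Real.sqrt_nonneg _
  have hDpos : 0 < D := Real.sqrt_pos.mpr (by linarith)
  have hDlt : D < j₁ := by
    have h1 : D ^ 2 < j₁ ^ 2 := by
      rw [hD2]
      have := pow_pos h3 2
      linarith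
    exact lt_of_pow_lt_pow_left₀ 2 hj1.le h1
  set zp : ℝ := (j₁ + D) / j₃ with hzp
  set zm : ℝ := (j₁ - D) / j₃ with hzm
  have hzppos : 0 < zp := div_pos (by linarith) h3
  have hzmpos : 0 < zm := div_pos (by linarith) h3
  have hjzp : j₃ * zp = j₁ + D := by rw [hzp]; field_simp
  have hjzm : j₃ * zm = j₁ - D := by rw [hzm]; field_simp
  have hzz : zp * zm = 1 := by
    have h := mul_left_cancel₀ (pow_ne_zero 2 hj3)
      (show j₃ ^ 2 * (zp * zm) = j₃ ^ 2 * 1 by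
        linear_combination (j₃ * zm) * hjzp + (j₁ + D) * hjzm - hD2)
    exact h
  have hzpq : j₃ * zp ^ 2 - 2 * j₁ * zp + j₃ = 0 := by
    have h : j₃ * (j₃ * zp ^ 2 - 2 * j₁ * zp + j₃) = j₃ * 0 := by
      linear_combination (j₃ * zp + j₁ + D - 2 * j₁) * hjzp + hD2
    exact mul_left_cancel₀ hj3 h
  have hzmq : j₃ * zm ^ 2 - 2 * j₁ * zm + j₃ = 0 := by
    have h : j₃ * (j₃ * zm ^ 2 - 2 * j₁ * zm + j₃) = j₃ * 0 := by
      linear_combination (j₃ * zm + j₁ - D - 2 * j₁) * hjzm + hD2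
    exact mul_left_cancel₀ hj3 h
  have hzlt : zm < zp := by
    rw [hzp, hzm]
    exact (div_lt_div_iff_of_pos_right h3).mpr (by linarith)
  have happos : 0 < j₃ / (2 * zp) := div_pos h3 (by positivity)
  have hampos : 0 < j₃ / (2 * zm) := div_pos h3 (by positivity)
  set b1p : ℝ := cbrt (j₃ / (2 * zp)) with hb1pd
  set b1m : ℝ := cbrt (j₃ / (2 * zm)) with hb1md
  have hb1ppos : 0 < b1p := cbrt_pos happos
  have hb1mpos : 0 < b1m := cbrt_pos hampos
  have hb1pc : b1p ^ 3 = j₃ / (2 * zp) := cbrt_pow _ happos.le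
  have hb1mc : b1m ^ 3 = j₃ / (2 * zm) := cbrt_pow _ hampos.le
  have hb1p3 : 2 * zp * b1p ^ 3 = j₃ := by rw [hb1pc]; field_simp
  have hb1m3 : 2 * zm * b1m ^ 3 = j₃ := by rw [hb1mc]; field_simp
  refine ⟨zp, zm, b1p, b1m, rfl, rfl, rfl, rfl, ?_, ?_, hzz, ?_, ?_⟩
  · -- set equality
    ext ⟨b₁, b₂, b₃⟩
    simp only [Set.mem_setOf_eq, Set.mem_insert_iff, Set.mem_singleton_iff, Prod.mk.injEq]
    constructor
    · rintro ⟨e1, e2, e3⟩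
      have hb12 : b₁ = b₂ := by
        by_contra hne
        have hfac : (b₁ - b₂) * (b₃ ^ 2 - b₁ * b₂) = 0 := by linear_combination e1 - e2
        have hq : b₃ ^ 2 = b₁ * b₂ := by
          rcases mul_eq_zero.mp hfac with h | h
          · exact absurd (by linarith : b₁ = b₂) hne
          · linarith
        have hb3ne : b₃ ≠ 0 := by
          intro h0
          rw [h0] at e3
          norm_num at e3
          linarith
        have hps : b₁ * b₂ * (b₁ + b₂) = j₁ := by linear_combination e1 - b₁ * hq
        have hp : 0 < b₁ * b₂ := by rw [← hq]; positivity
        have hs : 0 < b₁ + b₂ := by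
          by_contra hcon
          push_neg at hcon
          have := mul_nonpos_of_nonneg_of_nonpos hp.le hcon
          linarith
        have hsumsq : 0 < b₁ ^ 2 + b₂ ^ 2 := by
          have h1 := sq_nonneg (b₁ - b₂)
          have h2 : (b₁ - b₂) ^ 2 = b₁ ^ 2 + b₂ ^ 2 - 2 * (b₁ * b₂) := by ring
          linarith
        have hb3 : 0 < b₃ := by
          by_contra hcon
          push_neg at hcon
          have := mul_nonpos_of_nonpos_of_nonneg hcon hsumsq.le
          linarith
        have hne2 : 0 < (b₁ - b₂) ^ 2 := by
          have : b₁ - b₂ ≠ 0 := sub_ne_zero.mpr hne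
          positivity
        have hd : 0 < b₁ + b₂ - 2 * b₃ := by
          by_contra hcon
          push_neg at hcon
          have hle : (b₁ + b₂ - 2 * b₃) * (b₁ + b₂ + 2 * b₃) ≤ 0 :=
            mul_nonpos_of_nonpos_of_nonneg (by linarith) (by linarith)
          have hexp : (b₁ + b₂ - 2 * b₃) * (b₁ + b₂ + 2 * b₃)
              = (b₁ - b₂) ^ 2 + 4 * (b₁ * b₂) - 4 * (b₃ ^ 2) := by ring
          rw [hq] at hexp
          linarith
        have key : j₃ - j₁ = b₃ * (b₁ + b₂ - 2 * b₃) * (b₁ + b₂ + b₃) := by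
          linear_combination -e3 + hps + (b₁ + b₂ + 2 * b₃) * hq
        have hpos := mul_pos (mul_pos hb3 hd) (show (0:ℝ) < b₁ + b₂ + b₃ by linarith)
        linarith
      subst hb12
      have hquad : j₃ * b₃ ^ 2 - 2 * j₁ * b₁ * b₃ + j₃ * b₁ ^ 2 = 0 := by
        linear_combination 2 * b₁ * b₃ * e1 - (b₃ ^ 2 + b₁ ^ 2) * e3
      have hfac2 : (j₃ * b₃ - (j₁ + D) * b₁) * (j₃ * b₃ - (j₁ - D) * b₁) = 0 := by
        linear_combination j₃ * hquad - b₁ ^ 2 * hD2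
      rcases mul_eq_zero.mp hfac2 with h | h
      · left
        have hb3 : b₃ = zp * b₁ := by
          have := hjzp
          field_simp [hzp]
          exact mul_left_cancel₀ hj3 (by linear_combination h - b₁ * this)
        have hcube : b₁ ^ 3 = j₃ / (2 * zp) := by
          rw [eq_div_iff (by positivity : (2:ℝ) * zp ≠ 0)]
          linear_combination e3 - 2 * b₁ ^ 2 * hb3
        have hb1 : b₁ = b1p := by rw [hb1pd, ← hcube, cbrt_cube]
        exact ⟨hb1, hb1, by rw [hb3, hb1]⟩
      · right
        have hb3 : b₃ = zm * b₁ := by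
          have := hjzm
          field_simp [hzm]
          exact mul_left_cancel₀ hj3 (by linear_combination h - b₁ * this)
        have hcube : b₁ ^ 3 = j₃ / (2 * zm) := by
          rw [eq_div_iff (by positivity : (2:ℝ) * zm ≠ 0)]
          linear_combination e3 - 2 * b₁ ^ 2 * hb3
        have hb1 : b₁ = b1m := by rw [hb1md, ← hcube, cbrt_cube]
        exact ⟨hb1, hb1, by rw [hb3, hb1]⟩
    · rintro (⟨rfl, rfl, rfl⟩ | ⟨rfl, rfl, rfl⟩)
      · refine ⟨?_, ?_, ?_⟩
        · have hmul : (b1p * (b1p ^ 2 + (zp * b1p) ^ 2) - j₁) * (2 * zp) = 0 := by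
            linear_combination (1 + zp ^ 2) * hb1p3 + hzpq
          have := (mul_eq_zero.mp hmul).resolve_right (by positivity)
          linarith
        · have hmul : (b1p * (b1p ^ 2 + (zp * b1p) ^ 2) - j₁) * (2 * zp) = 0 := by
            linear_combination (1 + zp ^ 2) * hb1p3 + hzpq
          have := (mul_eq_zero.mp hmul).resolve_right (by positivity)
          linarith
        · linear_combination hb1p3
      · refine ⟨?_, ?_, ?_⟩
        · have hmul : (b1m * (b1m ^ 2 + (zm * b1m) ^ 2) - j₁) * (2 * zm) = 0 := by
            linear_combination (1 + zm ^ 2) * hb1m3 + hzmq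
          have := (mul_eq_zero.mp hmul).resolve_right (by positivity)
          linarith
        · have hmul : (b1m * (b1m ^ 2 + (zm * b1m) ^ 2) - j₁) * (2 * zm) = 0 := by
            linear_combination (1 + zm ^ 2) * hb1m3 + hzmq
          have := (mul_eq_zero.mp hmul).resolve_right (by positivity)
          linarith
        · linear_combination hb1m3
  · -- disequality
    intro hEq
    rw [Prod.mk.injEq, Prod.mk.injEq] at hEq
    obtain ⟨ha, _, hc⟩ := hEq
    rw [← ha] at hc
    have h0 : (zp - zm) * b1p = 0 := by linear_combination hc
    have := mul_pos (sub_pos.mpr hzlt) hb1ppos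
    linarith
  · -- product
    apply cube_inj
    rw [cbrt_pow _ (by positivity : (0:ℝ) ≤ (j₃ / 2) ^ 2), mul_pow, hb1pc, hb1mc]
    rw [div_mul_div_comm]
    rw [div_eq_iff (by positivity : (2 * zp) * (2 * zm) ≠ 0)]
    linear_combination (-(j₃ ^ 2)) * hzz
  · have hp : b1p * b1m = cbrt ((j₃ / 2) ^ 2) := by
      apply cube_inj
      rw [cbrt_pow _ (by positivity : (0:ℝ) ≤ (j₃ / 2) ^ 2), mul_pow, hb1pc, hb1mc]
      rw [div_mul_div_comm]
      rw [div_eq_iff (by positivity : (2 * zp) * (2 * zm) ≠ 0)]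
      linear_combination (-(j₃ ^ 2)) * hzz
    calc (zp * b1p) * (zm * b1m) = (zp * zm) * (b1p * b1m) := by ring
      _ = cbrt ((j₃ / 2) ^ 2) := by rw [hzz, one_mul, hp]
end

section
/- If j₁ = j₂ = 0 and j₃ > 0, then the system b₁(b₂² − b₃²) = j₁, b₂(b₁² − b₃²) = j₂, b₃(b₁² + b₂²) = j₃ has exactly four real solutions, namely (ε₁ c, ε₂ c, c) for the four choices of signs ε₁, ε₂ ∈ {+1, −1}, where c = (j₃/2)^{1/3} (real cube root). -/
theorem eq_cbrt_of_pow_three_eq {x y : ℝ} (h : y ^ 3 = x) : y = cbrt x :=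
  (Odd.pow_inj (n := 3) (by decide)).1 (by rw [h, cbrt_pow_three])

theorem cbrt_ne_zero {x : ℝ} (hx : x ≠ 0) : cbrt x ≠ 0 := fun h => by
  simpa [h, hx] using (cbrt_pow_three x).symm

theorem ncard_sign_orbit {α : Type*} [Neg α] {c : α} (hc : c ≠ -c) :
    ({(c, c, c), (c, -c, c), (-c, c, c), (-c, -c, c)} : Set (α × α × α)).ncard = 4 := by
  have hc' := hc.symm
  rw [Set.ncard_insert_of_notMem, Set.ncard_insert_of_notMem, Set.ncard_pair] <;> simp [hc, hc']

def cubicSystemSolutions (j₁ j₂ j₃ : ℝ) : Set (ℝ × ℝ × ℝ) :=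
  {t | t.1 * (t.2.1 ^ 2 - t.2.2 ^ 2) = j₁ ∧
    t.2.1 * (t.1 ^ 2 - t.2.2 ^ 2) = j₂ ∧
    t.2.2 * (t.1 ^ 2 + t.2.1 ^ 2) = j₃}

theorem sq_eq_sq_of_mem_cubicSystemSolutions {j₃ : ℝ} (hj : j₃ ≠ 0) {b₁ b₂ b₃ : ℝ}
    (hb : (b₁, b₂, b₃) ∈ cubicSystemSolutions 0 0 j₃) : b₁ ^ 2 = b₃ ^ 2 ∧ b₂ ^ 2 = b₃ ^ 2 := by
  obtain ⟨e₁, e₂, e₃⟩ := hb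
  simp only at e₁ e₂ e₃
  have hb₃ : b₃ ≠ 0 := by rintro rfl; simp_all
  rcases mul_eq_zero.1 e₁ with h₁ | h₁ <;> rcases mul_eq_zero.1 e₂ with h₂ | h₂
  · simp_all
  · subst h₁; exact absurd (by simpa [sub_eq_zero] using h₂.symm) (pow_ne_zero 2 hb₃)
  · subst h₂; exact absurd (by simpa [sub_eq_zero] using h₁.symm) (pow_ne_zero 2 hb₃)
  · exact ⟨sub_eq_zero.1 h₂, sub_eq_zero.1 h₁⟩

theorem cubicSystemSolutions_zero_zero {j : ℝ} (hj : j ≠ 0) :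
    cubicSystemSolutions 0 0 j =
      {(cbrt (j / 2), cbrt (j / 2), cbrt (j / 2)), (cbrt (j / 2), -cbrt (j / 2), cbrt (j / 2)),
        (-cbrt (j / 2), cbrt (j / 2), cbrt (j / 2)), (-cbrt (j / 2), -cbrt (j / 2), cbrt (j / 2))} := by
  set c := cbrt (j / 2)
  have hc₃ : c ^ 3 = j / 2 := cbrt_pow_three _
  ext ⟨b₁, b₂, b₃⟩
  simp only [Set.mem_insert_iff, Set.mem_singleton_iff, Prod.mk.injEq]
  constructor
  · intro hb
    obtain ⟨h₁, h₂⟩ := sq_eq_sq_of_mem_cubicSystemSolutions hj hb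
    have hb₃ : b₃ = c := by
      refine eq_cbrt_of_pow_three_eq ?_
      have e₃ := hb.2.2
      simp only [h₁, h₂] at e₃
      linarith
    subst hb₃
    rcases sq_eq_sq_iff_eq_or_eq_neg.1 h₁ with rfl | rfl <;>
      rcases sq_eq_sq_iff_eq_or_eq_neg.1 h₂ with rfl | rfl <;> simp
  · rintro (⟨rfl, rfl, rfl⟩ | ⟨rfl, rfl, rfl⟩ | ⟨rfl, rfl, rfl⟩ | ⟨rfl, rfl, rfl⟩) <;>
      exact ⟨by ring, by ring, by linear_combination 2 * hc₃⟩

/-- If `j₁ = j₂ = 0` and `j₃ > 0`, the system `b₁(b₂² − b₃²) = j₁`,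
`b₂(b₁² − b₃²) = j₂`, `b₃(b₁² + b₂²) = j₃` has exactly four real solutions, namely
`(ε₁ c, ε₂ c, c)` for the four sign choices `ε₁, ε₂ ∈ {1, −1}`, where `c = (j₃/2)^{1/3}`. -/
theorem hyperbolic_cubic_j1_j2_zero (j₁ j₂ j₃ : ℝ)
    (h1 : j₁ = 0) (h2 : j₂ = 0) (h3 : 0 < j₃) :
    ∃ c : ℝ, c = cbrt (j₃ / 2) ∧
      {t : ℝ × ℝ × ℝ |
          t.1 * (t.2.1 ^ 2 - t.2.2 ^ 2) = j₁ ∧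
          t.2.1 * (t.1 ^ 2 - t.2.2 ^ 2) = j₂ ∧
          t.2.2 * (t.1 ^ 2 + t.2.1 ^ 2) = j₃} =
        {(c, c, c), (c, -c, c), (-c, c, c), (-c, -c, c)} ∧
      ({(c, c, c), (c, -c, c), (-c, c, c), (-c, -c, c)} : Set (ℝ × ℝ × ℝ)).ncard = 4 := by
  subst h1 h2
  have hc : cbrt (j₃ / 2) ≠ 0 := cbrt_ne_zero (by positivity)
  exact ⟨_, rfl, cubicSystemSolutions_zero_zero h3.ne', ncard_sign_orbit (mt self_eq_neg.1 hc)⟩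
end

section
/- If j₁ = j₃ = 0 and j₂ ≠ 0, or if j₂ = j₃ = 0 and j₁ ≠ 0, then the system b₁(b₂² − b₃²) = j₁, b₂(b₁² − b₃²) = j₂, b₃(b₁² + b₂²) = j₃ has no real solutions. -/
/-! When `j₃ = 0` the third equation forces `b₃ = 0` or `b₁ = b₂ = 0`. In the first case the
system reads `b₁ b₂² = j₁`, `b₂ b₁² = j₂`, so `j₁` and `j₂` vanish together; in the second
both vanish. Either way `j₁ = 0 ↔ j₂ = 0`. -/

section

variable {R : Type*} [CommRing R] [LinearOrder R] [IsStrictOrderedRing R]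

theorem eq_zero_or_eq_zero_and_eq_zero_of_mul_sq_add_sq_eq_zero {a b c : R}
    (h : c * (a ^ 2 + b ^ 2) = 0) : c = 0 ∨ a = 0 ∧ b = 0 := by
  rcases mul_eq_zero.mp h with hc | hab
  · exact .inl hc
  · exact .inr (mul_self_add_mul_self_eq_zero.mp (by simpa only [sq] using hab))

theorem mul_sq_sub_sq_eq_zero_of_mul_sq_sub_sq_eq_zero {a b c : R}
    (h₃ : c * (a ^ 2 + b ^ 2) = 0) (h₁ : a * (b ^ 2 - c ^ 2) = 0) :
    b * (a ^ 2 - c ^ 2) = 0 := by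
  rcases eq_zero_or_eq_zero_and_eq_zero_of_mul_sq_add_sq_eq_zero h₃ with rfl | ⟨rfl, rfl⟩
  · rcases mul_eq_zero.mp h₁ with rfl | hb <;> simp_all
  · simp

end

/-- If `j₁ = j₃ = 0` and `j₂ ≠ 0`, or `j₂ = j₃ = 0` and `j₁ ≠ 0`, then the system
`b₁(b₂² − b₃²) = j₁`, `b₂(b₁² − b₃²) = j₂`, `b₃(b₁² + b₂²) = j₃` has no real solutions. -/
theorem hyperbolic_cubic_no_solutions (j₁ j₂ j₃ : ℝ)
    (h : (j₁ = 0 ∧ j₃ = 0 ∧ j₂ ≠ 0) ∨ (j₂ = 0 ∧ j₃ = 0 ∧ j₁ ≠ 0)) :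
    ¬ ∃ b₁ b₂ b₃ : ℝ,
        b₁ * (b₂ ^ 2 - b₃ ^ 2) = j₁ ∧
        b₂ * (b₁ ^ 2 - b₃ ^ 2) = j₂ ∧
        b₃ * (b₁ ^ 2 + b₂ ^ 2) = j₃ := by
  rintro ⟨b₁, b₂, b₃, e₁, e₂, e₃⟩
  rcases h with ⟨rfl, rfl, h₂⟩ | ⟨rfl, rfl, h₁⟩
  · exact h₂ (e₂.symm.trans (mul_sq_sub_sq_eq_zero_of_mul_sq_sub_sq_eq_zero e₃ e₁))
  · rw [add_comm] at e₃
    exact h₁ (e₁.symm.trans (mul_sq_sub_sq_eq_zero_of_mul_sq_sub_sq_eq_zero e₃ e₂))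
end

section
/- Root structure of the auxiliary cubic: let A > 0, B > 0 be real numbers with A ≠ 1, and let f(t) = A t³ + (B² − A² − 1) t² − 4 B². Then: (a) f has exactly one real root t₁ in the open interval (2, A + 1/A); (b) f has no real roots in the closed interval [−2, 2]; (c) every real root of f other than t₁ is strictly less than −2; (d) f has three distinct real roots if (B² − A² − 1)³ > 27 A² B², exactly two distinct real roots if (B² − A² − 1)³ = 27 A² B², and exactly one real root if (B² − A² − 1)³ < 27 A² B². -/
/-- Any two positive roots of the cubic coincide. -/
lemma aux_cubic_pos_root_uniq (A B c x y : ℝ) (hA : 0 < A) (hB : 0 < B)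
    (hx : 0 < x) (hy : 0 < y)
    (hfx : A * x ^ 3 + c * x ^ 2 - 4 * B ^ 2 = 0)
    (hfy : A * y ^ 3 + c * y ^ 2 - 4 * B ^ 2 = 0) : x = y := by
  have key : (x - y) * (A * x ^ 2 * y ^ 2 + 4 * B ^ 2 * (x + y)) = 0 := by
    linear_combination y ^ 2 * hfx - x ^ 2 * hfy
  rcases mul_eq_zero.mp key with h | h
  · exact sub_eq_zero.mp h
  · exfalso
    nlinarith [mul_pos (mul_pos hA (pow_pos hx 2)) (pow_pos hy 2), mul_pos hB hB,
      mul_pos hx hy]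

/-- A cubic with three distinct roots has no fourth root. -/
lemma aux_cubic_three_roots (A B c a b d t : ℝ) (hA : A ≠ 0)
    (h1 : A * a ^ 3 + c * a ^ 2 - 4 * B ^ 2 = 0)
    (h2 : A * b ^ 3 + c * b ^ 2 - 4 * B ^ 2 = 0)
    (h3 : A * d ^ 3 + c * d ^ 2 - 4 * B ^ 2 = 0)
    (ht : A * t ^ 3 + c * t ^ 2 - 4 * B ^ 2 = 0)
    (hab : a ≠ b) (had : a ≠ d) (hbd : b ≠ d) :
    t = a ∨ t = b ∨ t = d := by
  by_contra h
  push_neg at h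
  obtain ⟨na, nb, nd⟩ := h
  have g12 : A * (a ^ 2 + a * b + b ^ 2) + c * (a + b) = 0 := by
    have hz : (a - b) * (A * (a ^ 2 + a * b + b ^ 2) + c * (a + b)) = 0 := by
      linear_combination h1 - h2
    exact (mul_eq_zero.mp hz).resolve_left (sub_ne_zero.mpr hab)
  have g13 : A * (a ^ 2 + a * d + d ^ 2) + c * (a + d) = 0 := by
    have hz : (a - d) * (A * (a ^ 2 + a * d + d ^ 2) + c * (a + d)) = 0 := by
      linear_combination h1 - h3
    exact (mul_eq_zero.mp hz).resolve_left (sub_ne_zero.mpr had)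
  have g1t : A * (a ^ 2 + a * t + t ^ 2) + c * (a + t) = 0 := by
    have hz : (a - t) * (A * (a ^ 2 + a * t + t ^ 2) + c * (a + t)) = 0 := by
      linear_combination h1 - ht
    exact (mul_eq_zero.mp hz).resolve_left (sub_ne_zero.mpr na.symm)
  have s3 : A * (a + b + d) + c = 0 := by
    have hz : (b - d) * (A * (a + b + d) + c) = 0 := by
      linear_combination g12 - g13
    exact (mul_eq_zero.mp hz).resolve_left (sub_ne_zero.mpr hbd)
  have st : A * (a + b + t) + c = 0 := by
    have hz : (b - t) * (A * (a + b + t) + c) = 0 := by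
      linear_combination g12 - g1t
    exact (mul_eq_zero.mp hz).resolve_left (sub_ne_zero.mpr nb.symm)
  have hz : A * (d - t) = 0 := by linear_combination s3 - st
  have := (mul_eq_zero.mp hz).resolve_left hA
  exact nd (sub_eq_zero.mp this).symm

set_option maxHeartbeats 1000000 in
/-- Root structure of the auxiliary cubic `f(t) = A t³ + (B² − A² − 1) t² − 4 B²` for
`A, B > 0`, `A ≠ 1`: there is exactly one root `t₁ ∈ (2, A + 1/A)`; there are no roots in
`[−2, 2]`; all other roots are `< −2`; and the number of distinct real roots is `3`, `2`
or `1` according as `(B² − A² − 1)³` is `>`, `=` or `<` `27 A² B²`. -/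
theorem auxiliary_cubic_root_structure (A B : ℝ) (hA : 0 < A) (hA1 : A ≠ 1) (hB : 0 < B) :
    ∃ t₁ : ℝ,
      t₁ ∈ Set.Ioo 2 (A + 1 / A) ∧
      A * t₁ ^ 3 + (B ^ 2 - A ^ 2 - 1) * t₁ ^ 2 - 4 * B ^ 2 = 0 ∧
      (∀ t ∈ Set.Ioo 2 (A + 1 / A),
        A * t ^ 3 + (B ^ 2 - A ^ 2 - 1) * t ^ 2 - 4 * B ^ 2 = 0 → t = t₁) ∧
      (∀ t ∈ Set.Icc (-2 : ℝ) 2,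
        A * t ^ 3 + (B ^ 2 - A ^ 2 - 1) * t ^ 2 - 4 * B ^ 2 ≠ 0) ∧
      (∀ t : ℝ, A * t ^ 3 + (B ^ 2 - A ^ 2 - 1) * t ^ 2 - 4 * B ^ 2 = 0 → t ≠ t₁ →
        t < -2) ∧
      ((B ^ 2 - A ^ 2 - 1) ^ 3 > 27 * A ^ 2 * B ^ 2 →
        {t : ℝ | A * t ^ 3 + (B ^ 2 - A ^ 2 - 1) * t ^ 2 - 4 * B ^ 2 = 0}.ncard = 3) ∧
      ((B ^ 2 - A ^ 2 - 1) ^ 3 = 27 * A ^ 2 * B ^ 2 →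
        {t : ℝ | A * t ^ 3 + (B ^ 2 - A ^ 2 - 1) * t ^ 2 - 4 * B ^ 2 = 0}.ncard = 2) ∧
      ((B ^ 2 - A ^ 2 - 1) ^ 3 < 27 * A ^ 2 * B ^ 2 →
        {t : ℝ | A * t ^ 3 + (B ^ 2 - A ^ 2 - 1) * t ^ 2 - 4 * B ^ 2 = 0}.ncard = 1) := by
  set c : ℝ := B ^ 2 - A ^ 2 - 1 with hc
  have hA0 : A ≠ 0 := ne_of_gt hA
  have hA1sq : 0 < (A - 1) ^ 2 := by
    have h : A - 1 ≠ 0 := sub_ne_zero.mpr hA1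
    positivity
  have hcont : Continuous fun t : ℝ => A * t ^ 3 + c * t ^ 2 - 4 * B ^ 2 := by continuity
  have hs2 : (2 : ℝ) < A + 1 / A := by
    rw [show A + 1 / A = (A ^ 2 + 1) / A by field_simp, lt_div_iff₀ hA]
    nlinarith
  have hf2 : A * 2 ^ 3 + c * 2 ^ 2 - 4 * B ^ 2 < 0 := by rw [hc]; nlinarith
  have hAne : A - 1 / A ≠ 0 := by
    intro h
    rw [sub_eq_zero] at h
    have h2 : A * A = 1 := by field_simp at h; linarith
    rcases mul_self_eq_one_iff.mp h2 with h' | h'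
    · exact hA1 h'
    · linarith
  have hfs : 0 < A * (A + 1 / A) ^ 3 + c * (A + 1 / A) ^ 2 - 4 * B ^ 2 := by
    have heq : A * (A + 1 / A) ^ 3 + c * (A + 1 / A) ^ 2 - 4 * B ^ 2
        = B ^ 2 * (A - 1 / A) ^ 2 := by
      rw [hc]; field_simp; ring
    rw [heq]
    have h2 : 0 < (A - 1 / A) ^ 2 :=
      lt_of_le_of_ne (sq_nonneg _) (Ne.symm (pow_ne_zero 2 hAne))
    positivity
  -- existence of t₁
  obtain ⟨t₁, ht₁, hft₁'⟩ :=
    intermediate_value_Ioo (le_of_lt hs2) hcont.continuousOn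
      (Set.mem_Ioo.mpr ⟨hf2, hfs⟩)
  have hft₁ : A * t₁ ^ 3 + c * t₁ ^ 2 - 4 * B ^ 2 = 0 := hft₁'
  have ht₁pos : 0 < t₁ := by linarith [ht₁.1]
  have huniq : ∀ x y : ℝ, 0 < x → 0 < y →
      A * x ^ 3 + c * x ^ 2 - 4 * B ^ 2 = 0 →
      A * y ^ 3 + c * y ^ 2 - 4 * B ^ 2 = 0 → x = y :=
    fun x y hx hy hfx hfy => aux_cubic_pos_root_uniq A B c x y hA hB hx hy hfx hfy
  have hneg : ∀ t : ℝ, -2 ≤ t → t ≤ 2 → A * t ^ 3 + c * t ^ 2 - 4 * B ^ 2 < 0 := by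
    intro t h1 h2
    rw [hc]
    have ht4 : t ^ 2 ≤ 4 := by nlinarith
    rcases eq_or_lt_of_le ht4 with h4 | h4
    · have ht0 : 0 < t ^ 2 := by rw [h4]; norm_num
      nlinarith [mul_pos ht0 hA1sq, mul_nonneg (mul_nonneg hA.le (sq_nonneg t))
        (by linarith : (0:ℝ) ≤ 2 - t), mul_pos hB hB]
    · nlinarith [mul_pos (mul_pos hB hB) (by linarith : (0:ℝ) < 4 - t ^ 2),
        mul_nonneg (sq_nonneg t) hA1sq.le,
        mul_nonneg (mul_nonneg hA.le (sq_nonneg t)) (by linarith : (0:ℝ) ≤ 2 - t)]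
  have hother : ∀ t : ℝ, A * t ^ 3 + c * t ^ 2 - 4 * B ^ 2 = 0 → t ≠ t₁ → t < -2 := by
    intro t ht hne
    by_contra hcon
    push_neg at hcon
    rcases le_or_gt t 2 with h | h
    · exact absurd ht (ne_of_lt (hneg t hcon h))
    · exact hne (huniq t t₁ (by linarith) ht₁pos ht hft₁)
  have star : ∀ t : ℝ, 27 * A ^ 2 * (A * t ^ 3 + c * t ^ 2 - 4 * B ^ 2)
      = (3 * A * t + 2 * c) ^ 2 * (3 * A * t - c) + 4 * c ^ 3 - 108 * A ^ 2 * B ^ 2 :=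
    fun t => by ring
  have hABpos : 0 < 27 * A ^ 2 * B ^ 2 := by positivity
  refine ⟨t₁, ht₁, hft₁, ?_, ?_, hother, ?_, ?_, ?_⟩
  · -- uniqueness in Ioo
    intro t htm hft
    exact huniq t t₁ (by linarith [htm.1]) ht₁pos hft hft₁
  · -- no roots in Icc
    intro t htm
    exact ne_of_lt (hneg t htm.1 htm.2)
  · -- case >
    intro hgt
    have hcpos : 0 < c := by
      by_contra h
      push_neg at h
      nlinarith [mul_nonneg (neg_nonneg.mpr h) (sq_nonneg c)]
    have ht₂neg : -2 * c / (3 * A) < 0 := by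
      apply div_neg_of_neg_of_pos <;> nlinarith
    have ht₃lt : -4 * c / (3 * A) < -2 * c / (3 * A) := by
      rw [div_lt_div_iff₀ (by positivity) (by positivity)]
      nlinarith
    have h27b : 27 * A ^ 2 * (A * (-2 * c / (3 * A)) ^ 3 + c * (-2 * c / (3 * A)) ^ 2
        - 4 * B ^ 2) = 4 * c ^ 3 - 108 * A ^ 2 * B ^ 2 := by
      have h3a : 3 * A * (-2 * c / (3 * A)) = -2 * c := by field_simp
      rw [star, h3a]
      ring
    have hft₂ : 0 < A * (-2 * c / (3 * A)) ^ 3 + c * (-2 * c / (3 * A)) ^ 2 - 4 * B ^ 2 := by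
      by_contra h
      push_neg at h
      have hX : 27 * A ^ 2 * (A * (-2 * c / (3 * A)) ^ 3 + c * (-2 * c / (3 * A)) ^ 2
          - 4 * B ^ 2) ≤ 0 :=
        mul_nonpos_of_nonneg_of_nonpos (by positivity) h
      rw [h27b] at hX
      linarith
    have h27c : 27 * A ^ 2 * (A * (-4 * c / (3 * A)) ^ 3 + c * (-4 * c / (3 * A)) ^ 2
        - 4 * B ^ 2) = -16 * c ^ 3 - 108 * A ^ 2 * B ^ 2 := by
      have h3a : 3 * A * (-4 * c / (3 * A)) = -4 * c := by field_simp
      rw [star, h3a]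
      ring
    have hft₃ : A * (-4 * c / (3 * A)) ^ 3 + c * (-4 * c / (3 * A)) ^ 2 - 4 * B ^ 2 < 0 := by
      by_contra h
      push_neg at h
      have hX : 0 ≤ 27 * A ^ 2 * (A * (-4 * c / (3 * A)) ^ 3 + c * (-4 * c / (3 * A)) ^ 2
          - 4 * B ^ 2) :=
        mul_nonneg (by positivity) h
      rw [h27c] at hX
      nlinarith [pow_pos hcpos 3]
    have hf0 : A * (0:ℝ) ^ 3 + c * (0:ℝ) ^ 2 - 4 * B ^ 2 < 0 := by nlinarith
    obtain ⟨r₂, hr₂mem, hfr₂'⟩ :=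
      intermediate_value_Ioo (le_of_lt ht₃lt) hcont.continuousOn
        (Set.mem_Ioo.mpr ⟨hft₃, hft₂⟩)
    have hfr₂ : A * r₂ ^ 3 + c * r₂ ^ 2 - 4 * B ^ 2 = 0 := hfr₂'
    obtain ⟨r₃, hr₃mem, hfr₃'⟩ :=
      intermediate_value_Ioo' (le_of_lt ht₂neg) hcont.continuousOn
        (Set.mem_Ioo.mpr ⟨hf0, hft₂⟩)
    have hfr₃ : A * r₃ ^ 3 + c * r₃ ^ 2 - 4 * B ^ 2 = 0 := hfr₃'
    have hne23 : r₂ ≠ r₃ := ne_of_lt (lt_trans hr₂mem.2 hr₃mem.1)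
    have hne12 : t₁ ≠ r₂ := by
      have : r₂ < 0 := lt_trans hr₂mem.2 ht₂neg
      exact fun h => by rw [← h] at this; linarith
    have hne13 : t₁ ≠ r₃ := fun h => by rw [← h] at hr₃mem; linarith [hr₃mem.2]
    have hset : {t : ℝ | A * t ^ 3 + c * t ^ 2 - 4 * B ^ 2 = 0}
        = {t₁, r₂, r₃} := by
      ext t
      simp only [Set.mem_setOf_eq, Set.mem_insert_iff, Set.mem_singleton_iff]
      constructor
      · intro ht
        exact aux_cubic_three_roots A B c t₁ r₂ r₃ t hA0 hft₁ hfr₂ hfr₃ ht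
          hne12 hne13 hne23
      · rintro (rfl | rfl | rfl)
        exacts [hft₁, hfr₂, hfr₃]
    rw [hset, Set.ncard_insert_of_notMem (by
        simp only [Set.mem_insert_iff, Set.mem_singleton_iff]
        push_neg
        exact ⟨hne12, hne13⟩) (Set.toFinite _),
      Set.ncard_pair hne23]
  · -- case =
    intro heq
    have hcpos : 0 < c := by
      by_contra h
      push_neg at h
      nlinarith [mul_nonneg (neg_nonneg.mpr h) (sq_nonneg c)]
    have ht₂neg : -2 * c / (3 * A) < 0 := by
      apply div_neg_of_neg_of_pos <;> nlinarith
    have h27b : 27 * A ^ 2 * (A * (-2 * c / (3 * A)) ^ 3 + c * (-2 * c / (3 * A)) ^ 2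
        - 4 * B ^ 2) = 4 * c ^ 3 - 108 * A ^ 2 * B ^ 2 := by
      have h3a : 3 * A * (-2 * c / (3 * A)) = -2 * c := by field_simp
      rw [star, h3a]
      ring
    have hft₂ : A * (-2 * c / (3 * A)) ^ 3 + c * (-2 * c / (3 * A)) ^ 2 - 4 * B ^ 2 = 0 := by
      have hz : 27 * A ^ 2 * (A * (-2 * c / (3 * A)) ^ 3 + c * (-2 * c / (3 * A)) ^ 2
          - 4 * B ^ 2) = 0 := by rw [h27b]; linarith
      exact (mul_eq_zero.mp hz).resolve_left (by positivity)
    have hne : t₁ ≠ -2 * c / (3 * A) := fun h => by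
      rw [h] at ht₁pos; linarith
    have hset : {t : ℝ | A * t ^ 3 + c * t ^ 2 - 4 * B ^ 2 = 0}
        = {t₁, -2 * c / (3 * A)} := by
      ext t
      simp only [Set.mem_setOf_eq, Set.mem_insert_iff, Set.mem_singleton_iff]
      constructor
      · intro ht
        have hst := star t
        rw [ht, mul_zero] at hst
        have hz : (3 * A * t + 2 * c) ^ 2 * (3 * A * t - c) = 0 := by nlinarith
        rcases mul_eq_zero.mp hz with h0 | h0
        · right
          have h0' : 3 * A * t + 2 * c = 0 := by
            exact pow_eq_zero_iff (n := 2) (by norm_num) |>.mp h0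
          field_simp
          linarith
        · left
          have htpos : 0 < t := by nlinarith
          exact huniq t t₁ htpos ht₁pos ht hft₁
      · rintro (rfl | rfl)
        exacts [hft₁, hft₂]
    rw [hset, Set.ncard_pair hne]
  · -- case <
    intro hlt
    have hset : {t : ℝ | A * t ^ 3 + c * t ^ 2 - 4 * B ^ 2 = 0} = {t₁} := by
      ext t
      simp only [Set.mem_setOf_eq, Set.mem_singleton_iff]
      constructor
      · intro ht
        by_contra hne
        have htneg : t < -2 := hother t ht hne
        rcases le_or_gt c 0 with hcle | hcpos
        · nlinarith [mul_nonneg (neg_nonneg.mpr hcle) (sq_nonneg t),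
            mul_pos hA (show (0:ℝ) < -t ^ 3 by nlinarith), mul_pos hB hB]
        · have hst := star t
          rw [ht, mul_zero] at hst
          have hfac : (3 * A * t + 2 * c) ^ 2 * (3 * A * t - c) ≤ 0 :=
            mul_nonpos_of_nonneg_of_nonpos (sq_nonneg _) (by nlinarith)
          nlinarith
      · rintro rfl
        exact hft₁
    rw [hset, Set.ncard_singleton]
end

section
/- Let A > 0 and B > 0 be real numbers with A ≠ 1. If t is any real number with t ≠ 0 satisfying A t³ + (B² − A² − 1) t² − 4 B² = 0, then t − 2/t ≠ A and t − 2/t ≠ 1/A. -/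
/-!
If `s = t - 2/t = A`, then `t² - A t - 2 = 0`, and the cubic is
`(A t + B² - 1)(t² - A t - 2) + (B² + 1)(A t - 2)`, so `A t = 2`, `t² = 4` and hence `A² = 1`.
The case `s = 1/A` reduces to this one because the cubic for `(A⁻¹, B/A)` is the cubic for
`(A, B)` divided by `A²`.
-/

def hyperbolicCubic (A B t : ℝ) : ℝ := A * t ^ 3 + (B ^ 2 - A ^ 2 - 1) * t ^ 2 - 4 * B ^ 2

lemma hyperbolicCubic_inv_div (A B t : ℝ) (hA : A ≠ 0) :
    hyperbolicCubic A⁻¹ (B / A) t = hyperbolicCubic A B t / A ^ 2 := by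
  unfold hyperbolicCubic
  field_simp
  ring

lemma sq_eq_one_of_hyperbolicCubic_eq_zero_of_sub_two_div_eq {A B t : ℝ} (ht : t ≠ 0)
    (hroot : hyperbolicCubic A B t = 0) (hs : t - 2 / t = A) : A ^ 2 = 1 := by
  have hquad : t ^ 2 - A * t - 2 = 0 := by
    field_simp at hs
    linear_combination hs
  have hAt : A * t = 2 := by
    have hfactor : (B ^ 2 + 1) * (A * t - 2) = 0 := by
      unfold hyperbolicCubic at hroot
      linear_combination hroot - (A * t + B ^ 2 - 1) * hquad
    have hB : B ^ 2 + 1 ≠ 0 := by positivity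
    linear_combination (mul_eq_zero.mp hfactor).resolve_left hB
  linear_combination (A * t + 2 - A ^ 2) / 4 * hAt - A ^ 2 / 4 * hquad

theorem cubic_root_excludes_A_and_invA_general (A B t : ℝ)
    (hA : 0 < A) (hA1 : A ≠ 1) (ht : t ≠ 0)
    (hroot : A * t ^ 3 + (B ^ 2 - A ^ 2 - 1) * t ^ 2 - 4 * B ^ 2 = 0) :
    t - 2 / t ≠ A ∧ t - 2 / t ≠ 1 / A := by
  have hcubic : hyperbolicCubic A B t = 0 := hroot
  have hsq_ne_one {a : ℝ} (ha : 0 ≤ a) (ha1 : a ≠ 1) : a ^ 2 ≠ 1 :=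
    fun h => ha1 ((pow_eq_one_iff_of_nonneg ha two_ne_zero).mp h)
  constructor
  · exact fun hs => hsq_ne_one hA.le hA1
      (sq_eq_one_of_hyperbolicCubic_eq_zero_of_sub_two_div_eq ht hcubic hs)
  · intro hs
    rw [one_div] at hs
    have hcubic_inv : hyperbolicCubic A⁻¹ (B / A) t = 0 := by
      rw [hyperbolicCubic_inv_div A B t hA.ne', hcubic, zero_div]
    exact hsq_ne_one (inv_nonneg.mpr hA.le) (inv_ne_one.mpr hA1)
      (sq_eq_one_of_hyperbolicCubic_eq_zero_of_sub_two_div_eq ht hcubic_inv hs)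

/-- If `A, B > 0`, `A ≠ 1` and `t ≠ 0` satisfies
`A t³ + (B² − A² − 1) t² − 4 B² = 0`, then `t − 2/t ≠ A` and `t − 2/t ≠ 1/A`. -/
theorem cubic_root_excludes_A_and_invA (A B t : ℝ)
    (hA : 0 < A) (hA1 : A ≠ 1) (hB : 0 < B) (ht : t ≠ 0)
    (hroot : A * t ^ 3 + (B ^ 2 - A ^ 2 - 1) * t ^ 2 - 4 * B ^ 2 = 0) :
    t - 2 / t ≠ A ∧ t - 2 / t ≠ 1 / A :=
  cubic_root_excludes_A_and_invA_general A B t hA hA1 ht hroot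
end

section
/- Nonexistence of solutions for a totally isotropic current of full rank (the case d_J = 3): let J be a real n×3 matrix with rank(J) = 3 and Jᵀ η J = 0. Then there is no real n×3 matrix A satisfying A·(Aᵀ η A) − trace(Aᵀ η A)·A = J. -/
/-!
Write `S = Aᵀ η A` and `M = S - (trace S) • 1`, so that the equation reads `J = A M`.
Since `S` is symmetric, so is `M`, and `Jᵀ η J = M S M`. Full rank of `J` forces `M` to be
invertible, so isotropy of `J` gives `S = 0`, hence `M = 0`, contradicting invertibility.
-/

open Matrix

namespace Matrix

variable {m n R : Type*}

theorem isUnit_of_rank_eq_card [Fintype n] [DecidableEq n] [Field R] {M : Matrix n n R}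
    (h : M.rank = Fintype.card n) : IsUnit M := by
  rw [← mulVec_surjective_iff_isUnit]
  have hrange : LinearMap.range M.mulVecLin = ⊤ :=
    Submodule.eq_top_of_finrank_eq (by simpa [Matrix.rank] using h)
  exact LinearMap.range_eq_top.1 hrange

theorem isUnit_of_rank_mul_eq_card [Fintype m] [Fintype n] [DecidableEq n] [Field R]
    (A : Matrix m n R) {M : Matrix n n R} (h : (A * M).rank = Fintype.card n) : IsUnit M :=
  isUnit_of_rank_eq_card <|
    le_antisymm (rank_le_card_width M) (h ▸ rank_mul_le_right A M)

variable [Fintype m] [CommRing R]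

theorem IsSymm.transpose_mul_mul {G : Matrix m m R} (hG : G.IsSymm) (A : Matrix m n R) :
    (Aᵀ * G * A).IsSymm := by
  rw [IsSymm, transpose_mul, transpose_mul, transpose_transpose, hG.eq, Matrix.mul_assoc]

theorem IsSymm.transpose_mul_mul_mul [Fintype n] {M : Matrix n n R} (hM : M.IsSymm)
    (A : Matrix m n R) (G : Matrix m m R) :
    (A * M)ᵀ * G * (A * M) = M * (Aᵀ * G * A) * M := by
  rw [transpose_mul, hM.eq]
  simp only [Matrix.mul_assoc]

end Matrix

theorem eta_isSymm (p q : ℕ) : (eta p q).IsSymm :=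
  isSymm_diagonal _

theorem yangMills_eq_mul {m k R : Type*} [Fintype m] [Fintype k] [DecidableEq k] [CommRing R]
    (G : Matrix m m R) (A : Matrix m k R) :
    A * (Aᵀ * G * A) - (Aᵀ * G * A).trace • A =
      A * (Aᵀ * G * A - (Aᵀ * G * A).trace • 1) := by
  rw [Matrix.mul_sub, Matrix.mul_smul, Matrix.mul_one]

theorem yangMills_no_solution_dJ_three_general (p q : ℕ)
    (J : Matrix (Fin (p + q)) (Fin 3) ℝ)
    (hrank : J.rank = 3) (hiso : Jᵀ * eta p q * J = 0) :
    ¬ ∃ A : Matrix (Fin (p + q)) (Fin 3) ℝ,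
        A * (Aᵀ * eta p q * A) - (Aᵀ * eta p q * A).trace • A = J := by
  rintro ⟨A, hA⟩
  set S := Aᵀ * eta p q * A
  set M := S - S.trace • 1
  have hJ : J = A * M := hA ▸ yangMills_eq_mul _ A
  have hM_symm : M.IsSymm := ((eta_isSymm p q).transpose_mul_mul A).sub (isSymm_one.smul _)
  have hM_unit : IsUnit M :=
    isUnit_of_rank_mul_eq_card A (by rw [← hJ, hrank, Fintype.card_fin])
  have hS : S = 0 := by
    rw [hJ, hM_symm.transpose_mul_mul_mul] at hiso
    exact hM_unit.mul_right_eq_zero.1 (hM_unit.mul_left_eq_zero.1 hiso)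
  have hM : M = 0 := by simp only [M, hS, trace_zero, zero_smul, sub_zero]
  exact not_isUnit_zero (hM ▸ hM_unit)

/-- Nonexistence of solutions for a totally isotropic current of full rank (the case
`d_J = 3`): if `J` has rank `3` and `Jᵀ η J = 0`, then no potential `A` satisfies the
constant Yang–Mills system `A (Aᵀ η A) - trace (Aᵀ η A) • A = J`. -/
theorem yangMills_no_solution_dJ_three (p q : ℕ) (hp : 1 ≤ p) (hq : 1 ≤ q)
    (J : Matrix (Fin (p + q)) (Fin 3) ℝ)
    (hrank : J.rank = 3) (hiso : Jᵀ * eta p q * J = 0) :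
    ¬ ∃ A : Matrix (Fin (p + q)) (Fin 3) ℝ,
        A * (Aᵀ * eta p q * A) - (Aᵀ * eta p q * A).trace • A = J :=
  yangMills_no_solution_dJ_three_general p q J hrank hiso
end
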